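/- arXiv:math/0505570 — 6 statements merged into one kernel-verified Lean document; each statement's English description precedes it below -/
import Mathlib

section
/- Let $E$ be the exterior algebra on a vector space $V$ of dimension $v$ over a field $k$. Let $y_0, y_1, \ldots, y_j$ be linearly independent elements of $V$ and set $y_J = y_1 \wedge \cdots \wedge y_j$. Let $M$ be a homogeneous element of $E$ such that $M \wedge y_J$ has degree at most $v - 2$. If for every $y \in V$ the element $M \wedge y_J \wedge y$ has $y_0$ as a factor (i.e., can be written as $M' \wedge y_0$ for some $M'$ possibly depending on $y$), then $M \wedge y_J = N \wedge y_0 \wedge y_J$ for some homogeneous element $N \in E$. -/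
/-!
Put `X = M ∧ y_J`. For every `w`, `X ∧ y₀ ∧ w = ± M' ∧ y₀ ∧ y₀ = 0`, and `X ∧ y₀` has degree
`< dim V`; an element of degree `< dim V` killed by all vectors vanishes (otherwise it would be
divisible by a volume form), so `X ∧ y₀ = 0`. Also `X ∧ yᵢ = 0` for `i ≥ 1` since `yᵢ` already
divides `y_J`. An element killed by each member of an independent family `y₀, …, y_j` is
divisible by their product, which is `y₀ ∧ y_J`; a degree argument makes the cofactor homogeneous.
-/

open ExteriorAlgebra

section CanonicalOrder

open DirectSum

variable {ι A σ : Type*} [Semiring A] [DecidableEq ι]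
  [AddCommMonoid ι] [PartialOrder ι] [CanonicallyOrderedAdd ι]
  [SetLike σ A] [AddSubmonoidClass σ A] (𝒜 : ι → σ) [GradedRing 𝒜]
  {a b c : A} {d n : ι}

theorem DirectSum.eq_zero_of_eq_mul_of_mem_of_not_le (ha : a ∈ 𝒜 d) (hb : b ∈ 𝒜 n)
    (hnd : ¬n ≤ d) (h : a = c * b) : a = 0 := by
  rw [← decompose_of_mem_same 𝒜 ha, h, coe_decompose_mul_of_right_mem_of_not_le 𝒜 hb hnd]

theorem DirectSum.exists_mem_eq_mul_of_eq_mul [Sub ι] [OrderedSub ι] [AddLeftReflectLE ι]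
    (ha : a ∈ 𝒜 d) (hb : b ∈ 𝒜 n) (h : a = c * b) : ∃ e, ∃ c' ∈ 𝒜 e, a = c' * b := by
  by_cases hnd : n ≤ d
  · refine ⟨d - n, _, SetLike.coe_mem (decompose 𝒜 c (d - n)), ?_⟩
    rw [← decompose_of_mem_same 𝒜 ha, h, coe_decompose_mul_of_right_mem_of_le 𝒜 hb hnd]
  · exact ⟨0, 0, zero_mem _, by rw [eq_zero_of_eq_mul_of_mem_of_not_le 𝒜 ha hb hnd h, zero_mul]⟩

end CanonicalOrder

namespace ExteriorAlgebra

section CommRing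

variable {R M : Type*} [CommRing R] [AddCommGroup M] [Module R M]

theorem ιMulti_snoc {n : ℕ} (v : Fin n → M) (x : M) :
    ιMulti R (n + 1) (Fin.snoc v x) = ιMulti R n v * ι R x := by
  rw [ιMulti_apply, ιMulti_apply, List.ofFn_succ', List.prod_concat]
  simp only [Fin.snoc_castSucc, Fin.snoc_last]

theorem ιMulti_mul_ι_self {n : ℕ} (v : Fin n → M) (i : Fin n) :
    ιMulti R n v * ι R (v i) = 0 := by
  rw [← ιMulti_snoc]
  refine ιMulti_eq_zero_of_not_inj fun hinj => (Fin.castSucc_lt_last i).ne (hinj ?_)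
  simp

theorem contractRight_mul_ι_of_mul_ι_eq_zero (f : Module.Dual R M) {z : ExteriorAlgebra R M}
    {x : M} (hz : z * ι R x = 0) :
    CliffordAlgebra.contractRight z f * ι R x = f x • z := by
  have := CliffordAlgebra.contractRight_mul_ι (Q := 0) (d := f) x z
  rw [hz, map_zero, LinearMap.zero_apply, eq_comm, sub_eq_zero] at this
  exact this.symm

end CommRing

variable {k V : Type*} [Field k] [AddCommGroup V] [Module k V]

theorem exists_eq_mul_ιMulti_of_mul_ι_eq_zero {n : ℕ} {v : Fin n → V}
    (hv : LinearIndependent k v) {z : ExteriorAlgebra k V} (hz : ∀ i, z * ι k (v i) = 0) :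
    ∃ w, z = w * ιMulti k n v := by
  induction n generalizing z with
  | zero => exact ⟨z, by simp⟩
  | succ n ih =>
    obtain ⟨a, x, rfl⟩ : ∃ a x, v = Fin.snoc a x := ⟨_, _, (Fin.snoc_init_self v).symm⟩
    obtain ⟨ha, hx⟩ := linearIndependent_finSnoc.mp hv
    -- contracting with `f` dual to `x` and vanishing on the `a i` splits off the factor `ι x`
    obtain ⟨f, hfx, hfa_map⟩ := Submodule.exists_dual_map_eq_bot_of_notMem hx inferInstance
    have hfa_zero (i : Fin n) : f (a i) = 0 :=
      LinearMap.le_ker_iff_map.mpr hfa_map (Submodule.subset_span (Set.mem_range_self i))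
    set z₁ := CliffordAlgebra.contractRight z f
    have hz₁ : ∀ i, z₁ * ι k (a i) = 0 := fun i => by
      simpa [hfa_zero] using contractRight_mul_ι_of_mul_ι_eq_zero f (hz i.castSucc)
    obtain ⟨w, hw⟩ := ih ha hz₁
    refine ⟨(f x)⁻¹ • w, ?_⟩
    have hzx : z₁ * ι k x = f x • z :=
      contractRight_mul_ι_of_mul_ι_eq_zero f (by simpa using hz (Fin.last n))
    rw [ιMulti_snoc, smul_mul_assoc, ← mul_assoc, ← hw, hzx, inv_smul_smul₀ hfx]

theorem eq_zero_of_forall_mul_ι_eq_zero [FiniteDimensional k V] {d : ℕ}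
    (hd : d < Module.finrank k V) {z : ExteriorAlgebra k V} (hz : z ∈ ⋀[k]^d V)
    (h : ∀ x, z * ι k x = 0) : z = 0 := by
  let b := Module.finBasis k V
  obtain ⟨w, hw⟩ := exists_eq_mul_ιMulti_of_mul_ι_eq_zero b.linearIndependent fun i => h (b i)
  exact DirectSum.eq_zero_of_eq_mul_of_mem_of_not_le (fun i : ℕ => ⋀[k]^i V) hz
    (ιMulti_range k (Module.finrank k V) (Set.mem_range_self ⇑b)) (by omega) hw

theorem ι_mem_exteriorPower_one (x : V) : ι k x ∈ ⋀[k]^1 V := by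
  simpa only [pow_one] using LinearMap.mem_range_self (ι k) x

end ExteriorAlgebra

/-- Let `E` be the exterior algebra on a vector space `V` of dimension `v`
over a field `k`.  Let `y₀, y₁, …, y_j` be linearly independent elements of `V` and set
`y_J = y₁ ∧ ⋯ ∧ y_j`.  Let `M` be a homogeneous element of `E` (say of degree `m`) such that
`M ∧ y_J` has degree at most `v - 2` (i.e. `m + j ≤ v - 2`).  If for every `y ∈ V` the
element `M ∧ y_J ∧ y` has `y₀` as a factor (i.e. can be written `M' ∧ y₀`), then
`M ∧ y_J = N ∧ y₀ ∧ y_J` for some homogeneous element `N ∈ E`. -/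
theorem stmt1 (k V : Type) [Field k] [AddCommGroup V] [Module k V] [FiniteDimensional k V]
    (j m : ℕ) (y : Fin (j + 1) → V) (hy : LinearIndependent k y)
    (M : ExteriorAlgebra k V) (hM : M ∈ ⋀[k]^m V)
    (hdeg : m + j + 2 ≤ Module.finrank k V)
    (hfac : ∀ w : V, ∃ M' : ExteriorAlgebra k V,
        M * ExteriorAlgebra.ιMulti k j (fun i : Fin j => y i.succ) * ExteriorAlgebra.ι k w =
          M' * ExteriorAlgebra.ι k (y 0)) :
    ∃ (d : ℕ) (N : ExteriorAlgebra k V), N ∈ ⋀[k]^d V ∧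
      M * ExteriorAlgebra.ιMulti k j (fun i : Fin j => y i.succ) =
        N * ExteriorAlgebra.ι k (y 0) *
          ExteriorAlgebra.ιMulti k j (fun i : Fin j => y i.succ) := by
  set yJ := ιMulti k j fun i : Fin j => y i.succ
  have hX : M * yJ ∈ ⋀[k]^(m + j) V :=
    SetLike.mul_mem_graded hM (ιMulti_range k j (Set.mem_range_self _))
  have hX₀ : M * yJ * ι k (y 0) = 0 := by
    refine eq_zero_of_forall_mul_ι_eq_zero (d := m + j + 1) (by omega)
      (SetLike.mul_mem_graded hX (ι_mem_exteriorPower_one _)) fun w => ?_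
    obtain ⟨M', hM'⟩ := hfac w
    calc M * yJ * ι k (y 0) * ι k w = -(M * yJ * ι k w * ι k (y 0)) := by
          rw [mul_assoc, eq_neg_of_add_eq_zero_left (ι_add_mul_swap _ _), mul_neg, ← mul_assoc]
      _ = 0 := by rw [hM', mul_assoc, ι_sq_zero, mul_zero, neg_zero]
  have hXy (i : Fin (j + 1)) : M * yJ * ι k (y i) = 0 :=
    i.cases hX₀ fun l => by rw [mul_assoc, ιMulti_mul_ι_self (fun i => y i.succ) l, mul_zero]
  obtain ⟨w, hw⟩ := exists_eq_mul_ιMulti_of_mul_ι_eq_zero hy hXy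
  obtain ⟨d, N, hN, hXN⟩ := DirectSum.exists_mem_eq_mul_of_eq_mul (fun i : ℕ => ⋀[k]^i V) hX
    (ιMulti_range k _ (Set.mem_range_self y)) hw
  exact ⟨d, N, hN, by rw [hXN, ιMulti_succ_apply, mul_assoc]; rfl⟩
end

section
/- Let $V$ be a finite-dimensional vector space over a field $k$ of characteristic zero and let $A = T(V)/(xyt - txy : x,y,t \in V)$ be the quotient of the tensor algebra by the two-sided ideal generated by $xyt - txy$ for all $x, y, t \in V$. Then for every $p \geq 2$ there is a short exact sequence $0 \to \wedge^p V \xrightarrow{i} A_p \xrightarrow{j} S^p(V) \to 0$, where $j$ is the natural quotient map onto the symmetric power and $i$ sends $x_{i_1} \wedge \cdots \wedge x_{i_p}$ to the class of $x_{i_1} \cdots x_{i_p} - x_{i_{\sigma(1)}} \cdots x_{i_{\sigma(p)}}$ for any odd permutation $\sigma$. -/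
/-!
Call a permutation `σ` of the tensor factors of `V^{⊗p}` *admissible* if `x - x ∘ σ` lies in the
relation space `R_p` for every pure tensor `x`. Admissible permutations form a group, and the
relation `xyt = txy` says that the consecutive 3-cycles `s_{a+1} s_a` are admissible, where the
`s_a` are the adjacent transpositions. Telescoping gives all products `s_a s_b`, hence the whole
alternating group. Consequently, modulo `R_p`, the class of `x - x ∘ σ` is the same for every odd
`σ` and vanishes when two entries of `x` coincide: this is the alternating map inducing `i`, and
its image is the image of the kernel of `V^{⊗p} → S^p V`, which is `ker j`. Finally the
antisymmetrization `V^{⊗p} → ∧^p V` kills `R_p` (3-cycles are even) and maps `i(x₁ ∧ ⋯ ∧ x_p)` to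
`2 • x₁ ∧ ⋯ ∧ x_p`, so `i` is injective as `2 ≠ 0` in `k`.
-/

open scoped TensorProduct
open PiTensorProduct

namespace PBW5

variable (k V : Type) [Field k] [CharZero k] [AddCommGroup V] [Module k V]

/-- The pure tensor `x 0 ⊗ ⋯ ⊗ x (n-1)` in `V^{⊗n}`. -/
noncomputable def tpN (n : ℕ) (x : ℕ → V) : ⨂[k]^n V := tprod k fun i : Fin n => x i

/-- The 3-cycle at positions `a, a+1, a+2` corresponding to the relation `xyt - txy`:
the monomial `⋯ ⊗ x ⊗ y ⊗ t ⊗ ⋯` is matched with `⋯ ⊗ t ⊗ x ⊗ y ⊗ ⋯`. -/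
def rot3 (a : ℕ) (x : ℕ → V) : ℕ → V :=
  fun n =>
    if n = a then x (a + 2)
    else if n = a + 1 then x a
    else if n = a + 2 then x (a + 1)
    else x n

/-- The degree-`p` part of the two-sided ideal of `T(V)` generated by the elements
`x ⊗ y ⊗ t - t ⊗ x ⊗ y` (`x, y, t ∈ V`), i.e. `∑_{a+3+b=p} V^{⊗a} ⊗ R ⊗ V^{⊗b}` with
`R = span{xyt - txy}`; so `A_p = V^{⊗p} / (this)` is the degree-`p` part of
`A = T(V)/(xyt - txy)`. -/
noncomputable def relSub (p : ℕ) : Submodule k (⨂[k]^p V) :=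
  Submodule.span k
    {d | ∃ (x : ℕ → V) (a : ℕ), a + 3 ≤ p ∧ d = tpN k V p x - tpN k V p (rot3 V a x)}

/-- The subspace of `V^{⊗p}` spanned by all differences `x_{1} ⊗ ⋯ ⊗ x_{p} - x_{σ1} ⊗ ⋯`,
so that `V^{⊗p}/(this)` is the symmetric power `S^p(V)`. -/
noncomputable def symSub (p : ℕ) : Submodule k (⨂[k]^p V) :=
  Submodule.span k
    {d | ∃ (x : Fin p → V) (σ : Equiv.Perm (Fin p)),
      d = tprod k x - tprod k (fun i => x (σ i))}


open Equiv Equiv.Perm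

theorem _root_.Submodule.ker_factor {R M : Type*} [Ring R] [AddCommGroup M] [Module R M]
    {p p' : Submodule R M} (h : p ≤ p') : LinearMap.ker (Submodule.factor h) = p'.map p.mkQ := by
  rw [Submodule.factor, Submodule.mapQ, Submodule.ker_liftQ, LinearMap.ker_comp,
    Submodule.ker_mkQ, Submodule.comap_id]

theorem _root_.Equiv.Perm.swap_mul_swap_mem_of_consecutive {n : ℕ}
    (H : Subgroup (Perm (Fin (n + 1))))
    (h : ∀ i j : Fin n, (j : ℕ) = i + 1 →
      swap i.castSucc i.succ * swap j.castSucc j.succ ∈ H) (i j : Fin n) :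
    swap i.castSucc i.succ * swap j.castSucc j.succ ∈ H := by
  wlog hij : i ≤ j generalizing i j
  · simpa [mul_inv_rev, swap_inv] using H.inv_mem (this j i (le_of_not_ge hij))
  obtain ⟨d, hd⟩ := Nat.exists_eq_add_of_le (Fin.le_iff_val_le_val.mp hij)
  induction d generalizing j with
  | zero =>
    rw [show j = i from Fin.ext hd, swap_mul_self]
    exact H.one_mem
  | succ d ih =>
    let j' : Fin n := ⟨i + d, by omega⟩
    have hsplit : swap i.castSucc i.succ * swap j.castSucc j.succ =
        (swap i.castSucc i.succ * swap j'.castSucc j'.succ) *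
          (swap j'.castSucc j'.succ * swap j.castSucc j.succ) := by
      simp only [mul_assoc, swap_mul_self_mul]
    rw [hsplit]
    exact H.mul_mem (ih j' (Fin.le_iff_val_le_val.mpr (Nat.le_add_right _ _)) rfl)
      (h j' j (by simp [j']; omega))

theorem _root_.Equiv.Perm.alternatingGroup_le_of_swap_mul_swap_mem {n : ℕ}
    (H : Subgroup (Perm (Fin (n + 1))))
    (h : ∀ i j : Fin n, swap i.castSucc i.succ * swap j.castSucc j.succ ∈ H) :
    alternatingGroup (Fin (n + 1)) ≤ H := by
  suffices key : ∀ τ : Perm (Fin (n + 1)), (sign τ = 1 → τ ∈ H) ∧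
      (sign τ = -1 → ∀ j : Fin n, swap j.castSucc j.succ * τ ∈ H) from
    fun σ hσ => (key σ).1 (mem_alternatingGroup.mp hσ)
  intro τ
  induction (mclosure_swap_castSucc_succ n).symm ▸ Submonoid.mem_top τ
    using Submonoid.closure_induction_left with
  | one => exact ⟨fun _ => H.one_mem, fun h1 => absurd h1 (by simp)⟩
  | mul_left s hs τ _ ih =>
    obtain ⟨i, rfl⟩ := hs
    rw [Perm.sign_mul, sign_swap (Fin.castSucc_lt_succ (i := i)).ne, neg_one_mul,
      neg_eq_iff_eq_neg]
    refine ⟨fun hτ => ih.2 hτ i, fun hτ j => ?_⟩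
    rw [← mul_assoc]
    exact H.mul_mem (h j i) (ih.1 (by simpa using hτ))

section

omit [CharZero k]

variable {k V}

def relStabilizer (p : ℕ) : Subgroup (Perm (Fin p)) where
  carrier := {σ | ∀ x : Fin p → V, tprod k x - tprod k (x ∘ σ) ∈ relSub k V p}
  one_mem' x := by simp
  mul_mem' {σ τ} hσ hτ x := by
    have h := (relSub k V p).add_mem (hσ x) (hτ (x ∘ σ))
    rwa [sub_add_sub_cancel] at h
  inv_mem' {σ} hσ x := by
    have h := (relSub k V p).neg_mem (hσ (x ∘ ⇑σ⁻¹))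
    rwa [neg_sub, Function.comp_assoc, ← coe_mul, inv_mul_cancel, coe_one,
      Function.comp_id] at h

def rot3Perm {p a : ℕ} (h : a + 3 ≤ p) : Perm (Fin p) :=
  swap ⟨a + 1, by omega⟩ ⟨a + 2, by omega⟩ * swap ⟨a, by omega⟩ ⟨a + 1, by omega⟩

theorem rot3_apply_val {X : Type} {p a : ℕ} (h : a + 3 ≤ p) (x : ℕ → X) (i : Fin p) :
    rot3 X a x i = x (rot3Perm h i) := by
  simp only [rot3, rot3Perm, Perm.mul_apply, swap_apply_def, Fin.ext_iff]
  split_ifs <;> simp_all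

theorem sign_rot3Perm {p a : ℕ} (h : a + 3 ≤ p) : sign (rot3Perm h) = 1 := by
  rw [rot3Perm, Perm.sign_mul, sign_swap (by simp), sign_swap (by simp)]
  rfl

theorem tpN_rot3 {p a : ℕ} (h : a + 3 ≤ p) (x : ℕ → V) :
    tpN k V p (rot3 V a x) = tprod k ((fun i : Fin p => x i) ∘ rot3Perm h) := by
  simp only [tpN, rot3_apply_val h]
  rfl

theorem relSub_le_ker_of_forall_sign_eq_one {p : ℕ} {N : Type*} [AddCommGroup N] [Module k N]
    (f : (⨂[k]^p V) →ₗ[k] N)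
    (hf : ∀ (x : Fin p → V) (σ : Perm (Fin p)), sign σ = 1 →
      f (tprod k (x ∘ σ)) = f (tprod k x)) :
    relSub k V p ≤ LinearMap.ker f := by
  refine Submodule.span_le.mpr ?_
  rintro _ ⟨x, a, ha, rfl⟩
  rw [SetLike.mem_coe, LinearMap.mem_ker, map_sub, tpN_rot3 ha, hf _ _ (sign_rot3Perm ha), tpN,
    sub_self]

theorem rot3Perm_mem_relStabilizer {p a : ℕ} (h : a + 3 ≤ p) :
    rot3Perm h ∈ relStabilizer (k := k) (V := V) p := by
  intro x
  let y : ℕ → V := fun n => if hn : n < p then x ⟨n, hn⟩ else 0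
  have hy : (fun i : Fin p => y i) = x := funext fun i => dif_pos i.2
  refine Submodule.subset_span ⟨y, a, h, ?_⟩
  rw [tpN_rot3 h, tpN, hy]

theorem alternatingGroup_le_relStabilizer (p : ℕ) :
    alternatingGroup (Fin p) ≤ relStabilizer (k := k) (V := V) p := by
  rcases p with _ | n
  · intro σ _
    rw [Subsingleton.elim σ 1]
    exact Subgroup.one_mem _
  refine alternatingGroup_le_of_swap_mul_swap_mem _
    (swap_mul_swap_mem_of_consecutive _ fun i j hij => ?_)
  have h : (i : ℕ) + 3 ≤ n + 1 := by omega
  convert Subgroup.inv_mem _ (rot3Perm_mem_relStabilizer h) using 1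
  simp only [rot3Perm, mul_inv_rev, swap_inv]
  congr 2 <;> ext <;> simp [hij]

theorem tprod_sub_tprod_comp_mem_relSub {p : ℕ} (x : Fin p → V) {σ : Perm (Fin p)}
    (hσ : sign σ = 1) : tprod k x - tprod k (x ∘ σ) ∈ relSub k V p :=
  alternatingGroup_le_relStabilizer p (mem_alternatingGroup.mpr hσ) x

theorem tprod_comp_sub_tprod_comp_mem_relSub {p : ℕ} (x : Fin p → V) {σ τ : Perm (Fin p)}
    (hσ : sign σ = -1) (hτ : sign τ = -1) :
    tprod k (x ∘ σ) - tprod k (x ∘ τ) ∈ relSub k V p := by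
  have h := tprod_sub_tprod_comp_mem_relSub (k := k) (x ∘ σ) (σ := σ⁻¹ * τ) (by simp [hσ, hτ])
  rwa [Function.comp_assoc, ← coe_mul, mul_inv_cancel_left] at h

theorem relSub_le_symSub (p : ℕ) : relSub k V p ≤ symSub k V p := by
  rw [← Submodule.ker_mkQ (symSub k V p)]
  refine relSub_le_ker_of_forall_sign_eq_one _ fun x σ _ => ?_
  rw [Submodule.mkQ_apply, Submodule.mkQ_apply, eq_comm, Submodule.Quotient.eq]
  exact Submodule.subset_span ⟨x, σ, rfl⟩

variable (k V) in
noncomputable def wedgeAlternating {p : ℕ} (σ₀ : Perm (Fin p)) (hσ₀ : sign σ₀ = -1) :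
    V [⋀^Fin p]→ₗ[k] ((⨂[k]^p V) ⧸ relSub k V p) where
  toMultilinearMap := (relSub k V p).mkQ.compMultilinearMap
    (PiTensorProduct.tprod k - (PiTensorProduct.tprod k).domDomCongr σ₀)
  map_eq_zero_of_eq' x a b hab hne := by
    have hx : x ∘ swap a b = x := by
      funext i
      simp only [Function.comp_apply, swap_apply_def]
      split_ifs <;> simp_all
    show Submodule.Quotient.mk (tprod k x - tprod k (x ∘ σ₀)) = 0
    rw [Submodule.Quotient.mk_eq_zero]
    nth_rw 1 [← hx]
    exact tprod_comp_sub_tprod_comp_mem_relSub x (sign_swap hne) hσ₀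

variable (k V) in
noncomputable def wedgeMap {p : ℕ} (σ₀ : Perm (Fin p)) (hσ₀ : sign σ₀ = -1) :
    (⋀[k]^p V) →ₗ[k] ((⨂[k]^p V) ⧸ relSub k V p) :=
  exteriorPower.alternatingMapLinearEquiv (wedgeAlternating k V σ₀ hσ₀)

theorem wedgeMap_ιMulti {p : ℕ} {σ₀ : Perm (Fin p)} (hσ₀ : sign σ₀ = -1) (x : Fin p → V) :
    wedgeMap k V σ₀ hσ₀ (exteriorPower.ιMulti k p x) =
      Submodule.Quotient.mk (tprod k x - tprod k (x ∘ σ₀)) :=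
  exteriorPower.alternatingMapLinearEquiv_apply_ιMulti _ x

theorem wedgeMap_ιMulti_of_sign_eq_neg_one {p : ℕ} {σ₀ : Perm (Fin p)} (hσ₀ : sign σ₀ = -1)
    (x : Fin p → V) {σ : Perm (Fin p)} (hσ : sign σ = -1) :
    wedgeMap k V σ₀ hσ₀ (exteriorPower.ιMulti k p x) =
      Submodule.Quotient.mk (tprod k x - tprod k (x ∘ σ)) := by
  rw [wedgeMap_ιMulti, Submodule.Quotient.eq, sub_sub_sub_cancel_left]
  exact tprod_comp_sub_tprod_comp_mem_relSub x hσ hσ₀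

theorem range_wedgeMap {p : ℕ} {σ₀ : Perm (Fin p)} (hσ₀ : sign σ₀ = -1) :
    LinearMap.range (wedgeMap k V σ₀ hσ₀) = (symSub k V p).map (relSub k V p).mkQ := by
  rw [LinearMap.range_eq_map, ← exteriorPower.ιMulti_span, Submodule.map_span, symSub,
    Submodule.map_span]
  apply le_antisymm
  · refine Submodule.span_le.mpr ?_
    rintro _ ⟨_, ⟨x, rfl⟩, rfl⟩
    exact Submodule.subset_span ⟨_, ⟨x, σ₀, rfl⟩, (wedgeMap_ιMulti hσ₀ x).symm⟩
  · refine Submodule.span_le.mpr ?_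
    rintro _ ⟨_, ⟨x, σ, rfl⟩, rfl⟩
    rcases Int.units_eq_one_or (sign σ) with hσ | hσ
    · have h := (Submodule.Quotient.mk_eq_zero (relSub k V p)).mpr
        (tprod_sub_tprod_comp_mem_relSub x hσ)
      rw [SetLike.mem_coe, Submodule.mkQ_apply]
      exact h ▸ Submodule.zero_mem _
    · exact Submodule.subset_span
        ⟨_, ⟨x, rfl⟩, wedgeMap_ιMulti_of_sign_eq_neg_one hσ₀ x hσ⟩

variable (k V) in
noncomputable def wedgeRetraction (p : ℕ) : ((⨂[k]^p V) ⧸ relSub k V p) →ₗ[k] ⋀[k]^p V :=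
  (relSub k V p).liftQ (PiTensorProduct.lift (exteriorPower.ιMulti k p).toMultilinearMap)
    (relSub_le_ker_of_forall_sign_eq_one _ fun x σ hσ => by
      simp [AlternatingMap.map_perm, hσ])

theorem wedgeRetraction_comp_wedgeMap {p : ℕ} {σ₀ : Perm (Fin p)} (hσ₀ : sign σ₀ = -1) :
    wedgeRetraction k V p ∘ₗ wedgeMap k V σ₀ hσ₀ = (2 : k) • LinearMap.id := by
  apply exteriorPower.linearMap_ext
  ext x
  simp [wedgeMap_ιMulti, wedgeRetraction, AlternatingMap.map_perm, hσ₀, two_smul]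

theorem injective_wedgeMap [CharZero k] {p : ℕ} {σ₀ : Perm (Fin p)} (hσ₀ : sign σ₀ = -1) :
    Function.Injective (wedgeMap k V σ₀ hσ₀) := by
  have h := LinearMap.congr_fun (wedgeRetraction_comp_wedgeMap (k := k) (V := V) hσ₀)
  simp only [LinearMap.comp_apply, LinearMap.smul_apply, LinearMap.id_apply] at h
  refine fun v w hvw => smul_right_injective _ (two_ne_zero (α := k)) ?_
  simp only [← h v, ← h w, hvw]

end

theorem stmt5 (p : ℕ) (hp : 2 ≤ p) :
    ∃ (i : (⋀[k]^p V) →ₗ[k] ((⨂[k]^p V) ⧸ relSub k V p))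
      (j : ((⨂[k]^p V) ⧸ relSub k V p) →ₗ[k] ((⨂[k]^p V) ⧸ symSub k V p)),
      (∀ (x : Fin p → V) (σ : Equiv.Perm (Fin p)), Equiv.Perm.sign σ = -1 →
        i ⟨ExteriorAlgebra.ιMulti k p x, ExteriorAlgebra.ιMulti_range k p (Set.mem_range_self x)⟩ =
          Submodule.Quotient.mk (tprod k x - tprod k (fun t => x (σ t)))) ∧
      (∀ t : ⨂[k]^p V,
        j (Submodule.Quotient.mk t) = Submodule.Quotient.mk t) ∧
      Function.Injective i ∧
      Function.Surjective j ∧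
      LinearMap.range i = LinearMap.ker j := by
  have hσ₀ : sign (swap (⟨0, by omega⟩ : Fin p) ⟨1, by omega⟩) = -1 := sign_swap (by simp)
  refine ⟨wedgeMap k V _ hσ₀, Submodule.factor (relSub_le_symSub p),
    fun x σ hσ => wedgeMap_ιMulti_of_sign_eq_neg_one hσ₀ x hσ, fun _ => rfl,
    injective_wedgeMap hσ₀, Submodule.factor_surjective _, ?_⟩
  rw [range_wedgeMap, Submodule.ker_factor]

end PBW5
end

section
/- In characteristic zero, the algebra $U = k[x,y,z]/(y^2 - xz,\ xy,\ z^2 + x)$ is finite-dimensional as a $k$-vector space, whereas the associated graded algebra $A = k[x,y,z]/(y^2 - xz,\ xy,\ z^2)$ has Krull dimension $1$; in particular $\mathrm{gr}\, U$ is not isomorphic to $A$, so $U$ is not a PBW-deformation of $A$. -/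
/-!
In `U` the relation `z² = -x` together with `xy = 0` and `y² = xz` makes `x`, `y`, `z` nilpotent,
so `U` is a finitely generated integral, hence finite, `k`-algebra.
In `A` the elements `y` and `z` are nilpotent, so `A` has the same prime spectrum as
`k[x,y,z]/(y, z) ≅ k[x]`, and `dim A = dim k[x] = 1`. A finite-dimensional algebra is Artinian,
hence of Krull dimension `0`, so it cannot be isomorphic to `A`.
-/

open MvPolynomial

theorem ringKrullDim_quotient_eq_of_radical_eq {R : Type*} [CommRing R] {I J : Ideal R}
    (h : I.radical = J.radical) : ringKrullDim (R ⧸ I) = ringKrullDim (R ⧸ J) := by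
  rw [ringKrullDim_quotient, ringKrullDim_quotient, ← PrimeSpectrum.zeroLocus_radical, h,
    PrimeSpectrum.zeroLocus_radical]

theorem ringKrullDim_nonpos_of_finiteDimensional (k B : Type*) [Field k] [CommRing B]
    [Algebra k B] [FiniteDimensional k B] : ringKrullDim B ≤ 0 := by
  have : IsArtinianRing B := IsArtinianRing.of_finite k B
  exact_mod_cast Ring.krullDimLE_iff.mp (inferInstance : Ring.KrullDimLE 0 B)

theorem IsNilpotent.isIntegral {R A : Type*} [CommRing R] [Ring A] [Algebra R A] {a : A}
    (h : IsNilpotent a) : IsIntegral R a := by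
  obtain ⟨n, hn⟩ := h
  exact ⟨Polynomial.X ^ n, Polynomial.monic_X_pow n, by simp [hn]⟩

namespace MvPolynomial

section Generators

variable {R σ : Type*} [CommRing R]

theorem isIntegral_quotient_of_isIntegral_X (I : Ideal (MvPolynomial σ R))
    (h : ∀ i, IsIntegral R (Ideal.Quotient.mk I (X i))) :
    Algebra.IsIntegral R (MvPolynomial σ R ⧸ I) := by
  refine ⟨fun a ↦ ?_⟩
  obtain ⟨p, rfl⟩ := Ideal.Quotient.mk_surjective a
  induction p using MvPolynomial.induction_on with
  | C r => exact isIntegral_algebraMap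
  | add p q hp hq => rw [map_add]; exact hp.add hq
  | mul_X p i hp => rw [map_mul]; exact hp.mul (h i)

theorem finite_quotient_of_isNilpotent_X [Finite σ] (I : Ideal (MvPolynomial σ R))
    (h : ∀ i, IsNilpotent (Ideal.Quotient.mk I (X i))) :
    Module.Finite R (MvPolynomial σ R ⧸ I) :=
  have := isIntegral_quotient_of_isIntegral_X I fun i ↦ (h i).isIntegral
  Algebra.IsIntegral.finite

end Generators

section XAxis

variable (R : Type*) [CommRing R]

noncomputable def restrictXAxis : MvPolynomial (Fin 3) R →ₐ[R] Polynomial R :=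
  aeval ![Polynomial.X, 0, 0]

theorem restrictXAxis_comp_aeval_X :
    (restrictXAxis R).comp (Polynomial.aeval (X 0)) = AlgHom.id R (Polynomial R) :=
  Polynomial.algHom_ext (by simp [restrictXAxis])

theorem restrictXAxis_surjective : Function.Surjective (restrictXAxis R) :=
  fun p ↦ ⟨Polynomial.aeval (X 0) p, congrArg (· p) (restrictXAxis_comp_aeval_X R)⟩

theorem ker_restrictXAxis :
    RingHom.ker (restrictXAxis R) = Ideal.span {X 1, X 2} := by
  set J : Ideal (MvPolynomial (Fin 3) R) := Ideal.span {X 1, X 2}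
  have hJ : J ≤ RingHom.ker (restrictXAxis R) := by
    rw [Ideal.span_le]
    rintro _ (rfl | rfl) <;> simp [restrictXAxis]
  refine le_antisymm (fun f hf ↦ ?_) hJ
  -- modulo `J`, every polynomial agrees with its restriction to the `x`-axis
  have hsection : ((Ideal.Quotient.mkₐ R J).comp (Polynomial.aeval (X 0))).comp
      (restrictXAxis R) = Ideal.Quotient.mkₐ R J := by
    refine MvPolynomial.algHom_ext fun i ↦ ?_
    fin_cases i <;> simp [restrictXAxis, J, eq_comm (a := (0 : MvPolynomial (Fin 3) R ⧸ J)),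
      Ideal.Quotient.eq_zero_iff_mem] <;> exact Ideal.subset_span (by simp)
  rw [← Ideal.Quotient.eq_zero_iff_mem, ← Ideal.Quotient.mkₐ_eq_mk R, ← hsection]
  simp [(RingHom.mem_ker).mp hf]

end XAxis

section Counterexample

variable (R : Type*) [CommRing R]

noncomputable abbrev idealU : Ideal (MvPolynomial (Fin 3) R) :=
  Ideal.span {X 1 ^ 2 - X 0 * X 2, X 0 * X 1, X 2 ^ 2 + X 0}

noncomputable abbrev idealA : Ideal (MvPolynomial (Fin 3) R) :=
  Ideal.span {X 1 ^ 2 - X 0 * X 2, X 0 * X 1, X 2 ^ 2}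

theorem finite_quotient_idealU : Module.Finite R (MvPolynomial (Fin 3) R ⧸ idealU R) := by
  set q := Ideal.Quotient.mk (idealU R)
  have rel (f) (hf : f ∈ ({X 1 ^ 2 - X 0 * X 2, X 0 * X 1, X 2 ^ 2 + X 0} : Set _)) : q f = 0 :=
    Ideal.Quotient.eq_zero_iff_mem.mpr (Ideal.subset_span hf)
  have h₁ := rel _ (.inl rfl)
  have h₂ := rel _ (.inr (.inl rfl))
  have h₃ := rel _ (.inr (.inr rfl))
  simp only [map_sub, map_add, map_mul, map_pow] at h₁ h₂ h₃
  have hx : IsNilpotent (q (X 0)) :=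
    ⟨3, by linear_combination q (X 0) ^ 2 * h₃ - q (X 2) * q (X 1) * h₂ + q (X 0) * q (X 2) * h₁⟩
  have hy : IsNilpotent (q (X 1)) := ⟨3, by linear_combination q (X 1) * h₁ + q (X 2) * h₂⟩
  have hz : IsNilpotent (q (X 2)) :=
    .of_pow (m := 2) (by rw [eq_neg_of_add_eq_zero_left h₃]; exact hx.neg)
  refine finite_quotient_of_isNilpotent_X _ fun i ↦ ?_
  fin_cases i
  exacts [hx, hy, hz]

theorem radical_idealA :
    (idealA R).radical = (RingHom.ker (restrictXAxis R)).radical := by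
  rw [ker_restrictXAxis]
  refine le_antisymm (Ideal.radical_mono ?_) ?_
  · rw [Ideal.span_le]
    rintro _ (rfl | rfl | rfl) <;> refine Ideal.mem_span_pair.mpr ?_
    exacts [⟨X 1, -X 0, by ring⟩, ⟨X 0, 0, by ring⟩, ⟨0, X 2, by ring⟩]
  · rw [Ideal.radical_le_radical_iff, Ideal.span_le]
    rintro _ (rfl | rfl)
    · refine ⟨3, ?_⟩
      rw [show (X 1 : MvPolynomial (Fin 3) R) ^ 3 = X 1 * (X 1 ^ 2 - X 0 * X 2) + X 2 * (X 0 * X 1)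
        by ring]
      exact add_mem (Ideal.mul_mem_left _ _ (Ideal.subset_span (.inl rfl)))
        (Ideal.mul_mem_left _ _ (Ideal.subset_span (.inr (.inl rfl))))
    · exact ⟨2, Ideal.subset_span (.inr (.inr rfl))⟩

theorem ringKrullDim_quotient_idealA (k : Type*) [Field k] :
    ringKrullDim (MvPolynomial (Fin 3) k ⧸ idealA k) = 1 :=
  calc ringKrullDim (MvPolynomial (Fin 3) k ⧸ idealA k)
      = ringKrullDim (MvPolynomial (Fin 3) k ⧸ RingHom.ker (restrictXAxis k)) :=
        ringKrullDim_quotient_eq_of_radical_eq (radical_idealA k)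
    _ = ringKrullDim (Polynomial k) := ringKrullDim_eq_of_ringEquiv
        (Ideal.quotientKerAlgEquivOfSurjective (restrictXAxis_surjective k)).toRingEquiv
    _ = 1 := by simp [ringKrullDim_eq_zero_of_field]

end Counterexample

end MvPolynomial

theorem stmt11_general (k : Type) [Field k] :
    FiniteDimensional k
      (MvPolynomial (Fin 3) k ⧸
        Ideal.span {(X 1 : MvPolynomial (Fin 3) k) ^ 2 - X 0 * X 2, X 0 * X 1,
          (X 2) ^ 2 + X 0}) ∧
    ringKrullDim
      (MvPolynomial (Fin 3) k ⧸
        Ideal.span {(X 1 : MvPolynomial (Fin 3) k) ^ 2 - X 0 * X 2, X 0 * X 1,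
          (X 2 : MvPolynomial (Fin 3) k) ^ 2}) = 1 ∧
    ∀ (B : Type) [CommRing B] [Algebra k B], FiniteDimensional k B →
      IsEmpty
        (B ≃ₐ[k]
          (MvPolynomial (Fin 3) k ⧸
            Ideal.span {(X 1 : MvPolynomial (Fin 3) k) ^ 2 - X 0 * X 2, X 0 * X 1,
              (X 2 : MvPolynomial (Fin 3) k) ^ 2})) := by
  refine ⟨finite_quotient_idealU k, ringKrullDim_quotient_idealA k, fun B _ _ _ ↦ ⟨fun e ↦ ?_⟩⟩
  have hB := ringKrullDim_nonpos_of_finiteDimensional k B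
  rw [ringKrullDim_eq_of_ringEquiv e.toRingEquiv, ringKrullDim_quotient_idealA k] at hB
  exact absurd hB (by decide)

/-- In characteristic zero the algebra
`U = k[x,y,z]/(y² - xz, xy, z² + x)` is finite-dimensional as a `k`-vector space, whereas the
algebra `A = k[x,y,z]/(y² - xz, xy, z²)` has Krull dimension `1`; in particular no
finite-dimensional commutative `k`-algebra (such as the associated graded algebra `gr U` of
`U`) is isomorphic to `A`, so `U` is not a PBW-deformation of `A`. -/
theorem stmt11 (k : Type) [Field k] [CharZero k] :
    FiniteDimensional k
      (MvPolynomial (Fin 3) k ⧸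
        Ideal.span {(X 1 : MvPolynomial (Fin 3) k) ^ 2 - X 0 * X 2, X 0 * X 1,
          (X 2) ^ 2 + X 0}) ∧
    ringKrullDim
      (MvPolynomial (Fin 3) k ⧸
        Ideal.span {(X 1 : MvPolynomial (Fin 3) k) ^ 2 - X 0 * X 2, X 0 * X 1,
          (X 2 : MvPolynomial (Fin 3) k) ^ 2}) = 1 ∧
    ∀ (B : Type) [CommRing B] [Algebra k B], FiniteDimensional k B →
      IsEmpty
        (B ≃ₐ[k]
          (MvPolynomial (Fin 3) k ⧸
            Ideal.span {(X 1 : MvPolynomial (Fin 3) k) ^ 2 - X 0 * X 2, X 0 * X 1,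
              (X 2 : MvPolynomial (Fin 3) k) ^ 2})) :=
  stmt11_general k
end

section
/- Let $A = T(V)/(P)$ be a filtered algebra where $P \subseteq \bigoplus_{i \leq N} V^{\otimes i}$ is a subspace intersecting $\bigoplus_{i \leq N-1} V^{\otimes i}$ trivially, with top-degree part $R \subseteq V^{\otimes N}$, written as $P = \{r + \alpha_1(r) + \cdots + \alpha_N(r) : r \in R\}$ for linear maps $\alpha_i : R \to V^{\otimes N-i}$. If $(P) \cap F^N T(V) = P$ (where $F^N T(V) = \bigoplus_{i \leq N} V^{\otimes i}$ and $(P)$ is the two-sided ideal generated by $P$), then: (a) the image of $[\mathbf{1}, \alpha_1] = \mathbf{1} \otimes \alpha_1 - \alpha_1 \otimes \mathbf{1}$ restricted to $(V \otimes R) \cap (R \otimes V)$ is contained in $R$, and (b) $\alpha_i \circ [\mathbf{1}, \alpha_1] = [\mathbf{1}, \alpha_{i+1}]$ on $(V \otimes R) \cap (R \otimes V)$ for $i = 1, \ldots, N$, where $\alpha_{N+1} = 0$. -/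
/-!
Write `α₀` for the inclusion `R → T(V)` and `p = α₀ + α₁ + ⋯ + α_N`, so that `P = p(R)`. For `x`
in `(V ⊗ R) ∩ (R ⊗ V)` the element `y = [𝟙, p](x)` lies in the ideal `(P)`. Its top-degree part
`[𝟙, α₀](x)` vanishes, so `y = [𝟙, α₁](x) + ⋯ + [𝟙, α_N](x) ∈ F^N T(V)` (using `α_{N+1} = 0`),
hence `y ∈ P`, i.e. `y = p(r)` for some `r ∈ R`. Comparing homogeneous components of degree
`N - i` in `p(r) = y` gives `αᵢ(r) = [𝟙, α_{i+1}](x)` for `0 ≤ i ≤ N`; the case `i = 0` says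
`[𝟙, α₁](x) = r ∈ R`, and the others are the claimed identities.
-/

namespace PBW15

open TensorAlgebra
open scoped TensorProduct

variable (k V : Type) [Field k] [AddCommGroup V] [Module k V]

/-- The image of `V` in the tensor algebra `T(V)`. -/
noncomputable def Vsub : Submodule k (TensorAlgebra k V) :=
  LinearMap.range (TensorAlgebra.ι k : V →ₗ[k] TensorAlgebra k V)

/-- The filtration `F^N T(V) = ⊕_{i ≤ N} V^{⊗i}` of the tensor algebra. -/
noncomputable def filtr (N : ℕ) : Submodule k (TensorAlgebra k V) :=
  ∑ i ∈ Finset.range (N + 1), (Vsub k V) ^ i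

/-- The space of deformed relations `P = {r + α₁(r) + ⋯ + α_N(r) | r ∈ R}`. -/
noncomputable def Psub (N : ℕ) (R : Submodule k (TensorAlgebra k V))
    (α : ℕ → (R →ₗ[k] TensorAlgebra k V)) : Submodule k (TensorAlgebra k V) :=
  LinearMap.range (R.subtype + ∑ i ∈ Finset.Icc 1 N, α i)

/-- The two-sided ideal of `T(V)` generated by `P`, as a subspace. -/
noncomputable def idealP (N : ℕ) (R : Submodule k (TensorAlgebra k V))
    (α : ℕ → (R →ₗ[k] TensorAlgebra k V)) : Submodule k (TensorAlgebra k V) :=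
  Submodule.span k
    {x | ∃ u w : TensorAlgebra k V, ∃ p ∈ Psub k V N R α, x = u * p * w}

/-- The map `V ⊗ R → T(V)`, `v ⊗ r ↦ v · β(r)`, for a linear map `β : R → T(V)`. -/
noncomputable def oneT (R : Submodule k (TensorAlgebra k V))
    (β : R →ₗ[k] TensorAlgebra k V) : V ⊗[k] R →ₗ[k] TensorAlgebra k V :=
  TensorProduct.lift
    ((LinearMap.mul k (TensorAlgebra k V)).compl₁₂ (TensorAlgebra.ι k) β)

/-- The map `R ⊗ V → T(V)`, `r ⊗ v ↦ β(r) · v`, for a linear map `β : R → T(V)`. -/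
noncomputable def tOne (R : Submodule k (TensorAlgebra k V))
    (β : R →ₗ[k] TensorAlgebra k V) : R ⊗[k] V →ₗ[k] TensorAlgebra k V :=
  TensorProduct.lift
    ((LinearMap.mul k (TensorAlgebra k V)).compl₁₂ β (TensorAlgebra.ι k))


theorem _root_.DirectSum.decompose_sum_apply_of_injOn {ι κ M σ : Type*} [DecidableEq ι]
    [AddCommMonoid M] [SetLike σ M] [AddSubmonoidClass σ M] (ℳ : ι → σ)
    [DirectSum.Decomposition ℳ] {s : Finset κ} {d : κ → ι} (hd : Set.InjOn d s)
    {x : κ → M} (hx : ∀ i ∈ s, x i ∈ ℳ (d i)) {j : κ} (hj : j ∈ s) :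
    (DirectSum.decompose ℳ (∑ i ∈ s, x i) (d j) : M) = x j := by
  rw [DirectSum.decompose_sum, DirectSum.sum_apply, AddSubmonoidClass.coe_finsetSum,
    Finset.sum_eq_single_of_mem j hj, DirectSum.decompose_of_mem_same ℳ (hx j hj)]
  intro i hi hij
  exact DirectSum.decompose_of_mem_ne ℳ (hx i hi) fun h => hij (hd hi hj h)

theorem _root_.DirectSum.eq_of_sum_eq_sum_of_injOn {ι κ M σ : Type*} [DecidableEq ι]
    [AddCommMonoid M] [SetLike σ M] [AddSubmonoidClass σ M] (ℳ : ι → σ)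
    [DirectSum.Decomposition ℳ] {s : Finset κ} {d : κ → ι} (hd : Set.InjOn d s)
    {x y : κ → M} (hx : ∀ i ∈ s, x i ∈ ℳ (d i)) (hy : ∀ i ∈ s, y i ∈ ℳ (d i))
    (h : ∑ i ∈ s, x i = ∑ i ∈ s, y i) {j : κ} (hj : j ∈ s) : x j = y j := by
  rw [← DirectSum.decompose_sum_apply_of_injOn ℳ hd hx hj, h,
    DirectSum.decompose_sum_apply_of_injOn ℳ hd hy hj]

noncomputable instance : GradedAlgebra (fun i : ℕ => Vsub k V ^ i) :=
  TensorAlgebra.gradedAlgebra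

theorem pow_le_filtr {N d : ℕ} (hd : d ≤ N) : Vsub k V ^ d ≤ filtr k V N :=
  Finset.single_le_sum_of_canonicallyOrdered (Finset.mem_range.2 (Nat.lt_succ_of_le hd))

section Bracket

variable {k V} {R : Submodule k (TensorAlgebra k V)}

@[simp]
theorem oneT_tmul (β : R →ₗ[k] TensorAlgebra k V) (v : V) (r : R) :
    oneT k V R β (v ⊗ₜ r) = ι k v * β r := by
  simp [oneT]

@[simp]
theorem tOne_tmul (β : R →ₗ[k] TensorAlgebra k V) (r : R) (v : V) :
    tOne k V R β (r ⊗ₜ v) = β r * ι k v := by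
  simp [tOne]

theorem oneT_sum {κ : Type*} (s : Finset κ) (β : κ → R →ₗ[k] TensorAlgebra k V) :
    oneT k V R (∑ i ∈ s, β i) = ∑ i ∈ s, oneT k V R (β i) :=
  TensorProduct.ext' fun v r => by simp [Finset.mul_sum]

theorem tOne_sum {κ : Type*} (s : Finset κ) (β : κ → R →ₗ[k] TensorAlgebra k V) :
    tOne k V R (∑ i ∈ s, β i) = ∑ i ∈ s, tOne k V R (β i) :=
  TensorProduct.ext' fun r v => by simp [Finset.sum_mul]

theorem oneT_mem_mul {β : R →ₗ[k] TensorAlgebra k V} {M : Submodule k (TensorAlgebra k V)}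
    (hβ : ∀ r, β r ∈ M) (t : V ⊗[k] R) : oneT k V R β t ∈ Vsub k V * M := by
  induction t with
  | zero => simp
  | tmul v r => simpa using Submodule.mul_mem_mul (⟨v, rfl⟩ : ι k v ∈ Vsub k V) (hβ r)
  | add x y hx hy => simpa using add_mem hx hy

theorem tOne_mem_mul {β : R →ₗ[k] TensorAlgebra k V} {M : Submodule k (TensorAlgebra k V)}
    (hβ : ∀ r, β r ∈ M) (u : R ⊗[k] V) : tOne k V R β u ∈ M * Vsub k V := by
  induction u with
  | zero => simp
  | tmul r v => simpa using Submodule.mul_mem_mul (hβ r) (⟨v, rfl⟩ : ι k v ∈ Vsub k V)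
  | add x y hx hy => simpa using add_mem hx hy

noncomputable def oneBracket (β : R →ₗ[k] TensorAlgebra k V) (t : V ⊗[k] R) (u : R ⊗[k] V) :
    TensorAlgebra k V :=
  oneT k V R β t - tOne k V R β u

theorem oneBracket_sum {κ : Type*} (s : Finset κ) (β : κ → R →ₗ[k] TensorAlgebra k V)
    (t : V ⊗[k] R) (u : R ⊗[k] V) :
    oneBracket (∑ i ∈ s, β i) t u = ∑ i ∈ s, oneBracket (β i) t u := by
  simp only [oneBracket, oneT_sum, tOne_sum, LinearMap.sum_apply,
    Finset.sum_sub_distrib]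

@[simp]
theorem oneBracket_zero (t : V ⊗[k] R) (u : R ⊗[k] V) : oneBracket 0 t u = 0 := by
  simpa using oneBracket_sum ∅ (fun _ : Unit => 0) t u

theorem oneBracket_mem_pow_succ {β : R →ₗ[k] TensorAlgebra k V} {n : ℕ}
    (hβ : ∀ r, β r ∈ Vsub k V ^ n) (t : V ⊗[k] R) (u : R ⊗[k] V) :
    oneBracket β t u ∈ Vsub k V ^ (n + 1) :=
  sub_mem (pow_succ' (Vsub k V) n ▸ oneT_mem_mul hβ t) (pow_succ (Vsub k V) n ▸ tOne_mem_mul hβ u)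

theorem oneBracket_mem_idealP {N : ℕ} {α : ℕ → R →ₗ[k] TensorAlgebra k V}
    {β : R →ₗ[k] TensorAlgebra k V} (hβ : ∀ r, β r ∈ Psub k V N R α) (t : V ⊗[k] R)
    (u : R ⊗[k] V) : oneBracket β t u ∈ idealP k V N R α := by
  have hl : Vsub k V * Psub k V N R α ≤ idealP k V N R α := Submodule.mul_le.2 fun a _ p hp =>
    Submodule.subset_span ⟨a, 1, p, hp, by rw [mul_one]⟩
  have hr : Psub k V N R α * Vsub k V ≤ idealP k V N R α := Submodule.mul_le.2 fun p hp a _ =>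
    Submodule.subset_span ⟨1, a, p, hp, by rw [one_mul]⟩
  exact sub_mem (hl (oneT_mem_mul hβ t)) (hr (tOne_mem_mul hβ u))

end Bracket

/-- `P` is the image of `∑ i ≤ N, relComponent i`, whose `i`-th term has degree `N - i`. -/
noncomputable def relComponent (R : Submodule k (TensorAlgebra k V))
    (α : ℕ → R →ₗ[k] TensorAlgebra k V) : ℕ → R →ₗ[k] TensorAlgebra k V :=
  Function.update α 0 R.subtype

section Relations

variable {k V} {N : ℕ} {R : Submodule k (TensorAlgebra k V)} {α : ℕ → R →ₗ[k] TensorAlgebra k V}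

theorem Psub_eq_range_sum_relComponent :
    Psub k V N R α = LinearMap.range (∑ i ∈ Finset.range (N + 1), relComponent k V R α i) := by
  rw [Psub, Finset.sum_range_eq_add_Ico _ N.add_one_pos, Finset.Ico_add_one_right_eq_Icc,
    relComponent, Function.update_self]
  congr 2
  exact Finset.sum_congr rfl fun i hi =>
    (Function.update_of_ne (by simp at hi; omega) _ _).symm

theorem relComponent_apply_mem_pow (hR : R ≤ Vsub k V ^ N)
    (hα : ∀ i, 1 ≤ i → i ≤ N → ∀ r : R, α i r ∈ Vsub k V ^ (N - i)) {i : ℕ} (hi : i ≤ N)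
    (r : R) : relComponent k V R α i r ∈ Vsub k V ^ (N - i) := by
  cases i with
  | zero => exact hR r.2
  | succ i => simpa [relComponent] using hα (i + 1) i.succ_pos hi r

theorem oneBracket_relComponent_succ_mem_pow
    (hα : ∀ i, 1 ≤ i → i ≤ N → ∀ r : R, α i r ∈ Vsub k V ^ (N - i)) (hαtop : α (N + 1) = 0)
    {i : ℕ} (hi : i ≤ N) (t : V ⊗[k] R) (u : R ⊗[k] V) :
    oneBracket (relComponent k V R α (i + 1)) t u ∈ Vsub k V ^ (N - i) := by
  rcases hi.lt_or_eq with hi | rfl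
  · have hα' : ∀ r, α (i + 1) r ∈ Vsub k V ^ (N - (i + 1)) := hα (i + 1) i.succ_pos hi
    simpa [relComponent, show N - (i + 1) + 1 = N - i by omega] using
      oneBracket_mem_pow_succ hα' t u
  · simp [relComponent, hαtop]

theorem oneBracket_sum_relComponent (hαtop : α (N + 1) = 0) {t : V ⊗[k] R} {u : R ⊗[k] V}
    (htu : oneT k V R R.subtype t = tOne k V R R.subtype u) :
    oneBracket (∑ i ∈ Finset.range (N + 1), relComponent k V R α i) t u =
      ∑ i ∈ Finset.range (N + 1), oneBracket (relComponent k V R α (i + 1)) t u := by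
  have h0 : oneBracket (relComponent k V R α 0) t u = 0 := by
    simpa [relComponent, oneBracket, sub_eq_zero] using htu
  have htop : oneBracket (relComponent k V R α (N + 1)) t u = 0 := by
    simp [relComponent, hαtop]
  rw [oneBracket_sum, Finset.sum_range_succ', Finset.sum_range_succ, h0, htop]

theorem exists_relComponent_eq_oneBracket (hR : R ≤ Vsub k V ^ N)
    (hα : ∀ i, 1 ≤ i → i ≤ N → ∀ r : R, α i r ∈ Vsub k V ^ (N - i)) (hαtop : α (N + 1) = 0)
    (hPBW : idealP k V N R α ⊓ filtr k V N = Psub k V N R α) {t : V ⊗[k] R} {u : R ⊗[k] V}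
    (htu : oneT k V R R.subtype t = tOne k V R R.subtype u) :
    ∃ r : R, ∀ i ≤ N,
      relComponent k V R α i r = oneBracket (relComponent k V R α (i + 1)) t u := by
  set p := ∑ i ∈ Finset.range (N + 1), relComponent k V R α i
  have hdeg : ∀ i ∈ Finset.range (N + 1),
      oneBracket (relComponent k V R α (i + 1)) t u ∈ Vsub k V ^ (N - i) := fun i hi =>
    oneBracket_relComponent_succ_mem_pow hα hαtop (Finset.mem_range_succ_iff.1 hi) t u
  have hshift := oneBracket_sum_relComponent hαtop htu
  obtain ⟨r, hr⟩ : oneBracket p t u ∈ LinearMap.range p := by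
    rw [← Psub_eq_range_sum_relComponent, ← hPBW]
    refine ⟨oneBracket_mem_idealP (fun r => ?_) t u, hshift ▸ Submodule.sum_mem _ fun i hi =>
      pow_le_filtr k V (Nat.sub_le N i) (hdeg i hi)⟩
    rw [Psub_eq_range_sum_relComponent]
    exact LinearMap.mem_range_self p r
  refine ⟨r, fun i hi => DirectSum.eq_of_sum_eq_sum_of_injOn (fun n : ℕ => Vsub k V ^ n)
    (d := fun i => N - i) (fun i hi j hj h => ?_)
    (fun i hi => relComponent_apply_mem_pow hR hα (Finset.mem_range_succ_iff.1 hi) r) hdeg ?_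
    (Finset.mem_range_succ_iff.2 hi)⟩
  · simp only [Finset.coe_range, Set.mem_Iio] at hi hj h
    omega
  · rw [← LinearMap.sum_apply, ← hshift, hr]

end Relations

theorem stmt15 (N : ℕ)
    (R : Submodule k (TensorAlgebra k V)) (hR : R ≤ (Vsub k V) ^ N)
    (α : ℕ → (R →ₗ[k] TensorAlgebra k V))
    (hα : ∀ i, 1 ≤ i → i ≤ N → ∀ r : R, α i r ∈ (Vsub k V) ^ (N - i))
    (hαtop : α (N + 1) = 0)
    (hPBW : idealP k V N R α ⊓ filtr k V N = Psub k V N R α) :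
    ∀ (t : V ⊗[k] R) (u : R ⊗[k] V),
      oneT k V R R.subtype t = tOne k V R R.subtype u →
      ∃ hmem : oneT k V R (α 1) t - tOne k V R (α 1) u ∈ R,
        ∀ i, 1 ≤ i → i ≤ N →
          α i ⟨oneT k V R (α 1) t - tOne k V R (α 1) u, hmem⟩ =
            oneT k V R (α (i + 1)) t - tOne k V R (α (i + 1)) u := by
  intro t u htu
  obtain ⟨r, hr⟩ := exists_relComponent_eq_oneBracket hR hα hαtop hPBW htu
  have hr0 : (r : TensorAlgebra k V) = oneT k V R (α 1) t - tOne k V R (α 1) u := by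
    simpa [relComponent, oneBracket] using hr 0 N.zero_le
  refine ⟨hr0 ▸ r.2, fun i hi1 hiN => ?_⟩
  rw [show (⟨_, hr0 ▸ r.2⟩ : R) = r from Subtype.ext hr0.symm]
  simpa [relComponent, oneBracket, Nat.pos_iff_ne_zero.1 hi1] using hr i hiN

end PBW15
end

section
/- Let $k$ have characteristic zero, $\zeta$ a primitive third root of unity, $\gamma, a_{11}, a_{21}, a_3 \in k$. Set $U = k\langle x, y\rangle/(F, G)$ where $F = y^3 + x^3 + a_{11} x^2 + \frac{\gamma(1 + 2\zeta^2)}{1+\zeta} y^2 + a_{21} x + \frac{\gamma^2 \zeta}{1+\zeta} y + a_3$ and $G = y^2 x + \zeta yxy + \zeta^2 xy^2 + \frac{\gamma\zeta}{1+\zeta} xy - \frac{\gamma\zeta}{1+\zeta} yx$. Then the deformation maps $\alpha_1, \alpha_2, \alpha_3$ determined by the lower-order terms of $F$ and $G$ satisfy the PBW compatibility conditions: $[\mathbf{1}, \alpha_1](w) \in R$, $\alpha_1 \circ [\mathbf{1}, \alpha_1] = [\mathbf{1}, \alpha_2]$, $\alpha_2 \circ [\mathbf{1}, \alpha_1] =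 [\mathbf{1}, \alpha_3]$, and $\alpha_3 \circ [\mathbf{1}, \alpha_1] = 0$ on $(w)$, where $R = \langle y^3 + x^3,\ y^2x + \zeta yxy + \zeta^2 xy^2 \rangle$ and $w = y^3x + \zeta y^2xy + \zeta^2 yxy^2 + xy^3 + x^4$. -/
/-!
The relations can be taken with `β = 0`, `δ = γ`. Since `ζ² + ζ + 1 = 0` we have
`(1 + ζ)⁻¹ = -ζ`, and expanding `[𝟙, α₁](w)` monomial by monomial gives exactly `γ • g`.
Then `γ • α₁(g)` is the commutator of `x` with the linear term of `α₂(f)`, and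
`[𝟙, α₃](w) = 0` because `α₃(f) = a₃` is central.
-/

theorem IsPrimitiveRoot.sq_add_self_add_one {R : Type*} [CommRing R] [IsDomain R] {ζ : R}
    (hζ : IsPrimitiveRoot ζ 3) : ζ ^ 2 + ζ + 1 = 0 := by
  have h := hζ.geom_sum_eq_zero (by norm_num)
  simp only [Finset.sum_range_succ, Finset.sum_range_zero, pow_zero, pow_one] at h
  linear_combination h

theorem IsPrimitiveRoot.inv_one_add_self {K : Type*} [Field K] {ζ : K}
    (hζ : IsPrimitiveRoot ζ 3) : (1 + ζ)⁻¹ = -ζ :=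
  inv_eq_of_mul_eq_one_right (by linear_combination -hζ.sq_add_self_add_one)

section Bracket

variable {R A : Type*} [CommRing R] [Ring A] [Algebra R A]

theorem bracket_of_quadratic (ζ a b c : R) (x y : A) :
    x * (a • (x * x) + b • (y * y)) + y * (c • (x * y) - c • (y * x))
      - (a • (x * x) + b • (y * y)) * x - ζ • ((c • (x * y) - c • (y * x)) * y)
      = (-b - c) • (y * y * x) + (c + ζ * c) • (y * x * y) + (b - ζ * c) • (x * y * y) := by
  simp only [mul_add, add_mul, mul_sub, sub_mul, mul_assoc, mul_smul_comm, smul_mul_assoc,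
    smul_sub, smul_smul]
  match_scalars <;> ring

theorem commutator_of_linear (a e : R) (x y : A) :
    x * (a • x + e • y) - (a • x + e • y) * x = e • (x * y) - e • (y * x) := by
  simp only [mul_add, add_mul, mul_smul_comm, smul_mul_assoc]
  abel

end Bracket

theorem stmt18_general (k : Type) [Field k] (ζ : k) (hζ : IsPrimitiveRoot ζ 3)
    (γ a11 a21 a3 : k) :
    let x : FreeAlgebra k (Fin 2) := FreeAlgebra.ι k 0
    let y : FreeAlgebra k (Fin 2) := FreeAlgebra.ι k 1
    -- the cubic relations
    let f : FreeAlgebra k (Fin 2) := y * y * y + x * x * x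
    let g : FreeAlgebra k (Fin 2) := y * y * x + ζ • (y * x * y) + (ζ ^ 2) • (x * y * y)
    -- the lower-order parts of the deformed relations F = f + A1f + A2f + A3f,
    -- G = g + A1g + A2g + A3g, i.e. the values α₁(f), α₂(f), α₃(f), α₁(g), α₂(g), α₃(g)
    let A1f : FreeAlgebra k (Fin 2) :=
      a11 • (x * x) + (γ * (1 + 2 * ζ ^ 2) / (1 + ζ)) • (y * y)
    let A2f : FreeAlgebra k (Fin 2) := a21 • x + (γ ^ 2 * ζ / (1 + ζ)) • y
    let A3f : FreeAlgebra k (Fin 2) := algebraMap k (FreeAlgebra k (Fin 2)) a3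
    let A1g : FreeAlgebra k (Fin 2) :=
      (γ * ζ / (1 + ζ)) • (x * y) - (γ * ζ / (1 + ζ)) • (y * x)
    let A2g : FreeAlgebra k (Fin 2) := 0
    let A3g : FreeAlgebra k (Fin 2) := 0
    -- the PBW compatibility conditions of Theorem 1.1, evaluated on the syzygy w
    ∃ β δ : k,
      (x * A1f + y * A1g - A1f * x - ζ • (A1g * y) = β • f + δ • g) ∧
      (β • A1f + δ • A1g = x * A2f + y * A2g - A2f * x - ζ • (A2g * y)) ∧
      (β • A2f + δ • A2g = x * A3f + y * A3g - A3f * x - ζ • (A3g * y)) ∧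
      β • A3f + δ • A3g = 0 := by
  intro x y f g A1f A2f A3f A1g A2g A3g
  have hsum := hζ.sq_add_self_add_one
  have hinv := hζ.inv_one_add_self
  refine ⟨0, γ, ?_, ?_, ?_, ?_⟩
  · have hyyx : -(γ * (1 + 2 * ζ ^ 2) / (1 + ζ)) - γ * ζ / (1 + ζ) = γ := by
      simp only [div_eq_mul_inv, hinv]; linear_combination (2 * γ * ζ - γ) * hsum
    have hyxy : γ * ζ / (1 + ζ) + ζ * (γ * ζ / (1 + ζ)) = γ * ζ := by
      simp only [div_eq_mul_inv, hinv]; linear_combination (-γ * ζ) * hsum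
    have hxyy : γ * (1 + 2 * ζ ^ 2) / (1 + ζ) - ζ * (γ * ζ / (1 + ζ)) = γ * ζ ^ 2 := by
      simp only [div_eq_mul_inv, hinv]; linear_combination (-γ * ζ) * hsum
    rw [bracket_of_quadratic, hyyx, hyxy, hxyy, zero_smul, zero_add]
    simp only [g, smul_add, smul_smul]
  · have hcoeff : γ ^ 2 * ζ / (1 + ζ) = γ * (γ * ζ / (1 + ζ)) := by ring
    simp only [A2g, mul_zero, zero_mul, smul_zero, add_zero, sub_zero, zero_smul, zero_add]
    rw [commutator_of_linear, hcoeff, smul_sub, smul_smul, smul_smul]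
  · simp only [A3g, A2g, A3f, mul_zero, zero_mul, smul_zero, zero_smul, add_zero,
      Algebra.commutes, sub_self]
  · simp only [A3g, zero_smul, smul_zero, add_zero]

/-- PBW compatibility for the deformation of the type-E cubic
Artin–Schelter algebra.  With `f, g` the cubic relations and `w = xf + yg = fx + ζ gy`
spanning `(V ⊗ R) ∩ (R ⊗ V)`, the deformation maps `α₁, α₂, α₃` determined by the
lower-order parts of the deformed relations `F, G` satisfy
`[𝟙, α₁](w) ∈ R`, `α₁ ∘ [𝟙, α₁] = [𝟙, α₂]`, `α₂ ∘ [𝟙, α₁] = [𝟙, α₃]` and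
`α₃ ∘ [𝟙, α₁] = 0` on `(w)`.  Here `[𝟙, α](w) = x·α(f) + y·α(g) - α(f)·x - ζ·α(g)·y`,
computed via the two expressions for `w`. -/
theorem stmt18 (k : Type) [Field k] [CharZero k] (ζ : k) (hζ : IsPrimitiveRoot ζ 3)
    (γ a11 a21 a3 : k) :
    let x : FreeAlgebra k (Fin 2) := FreeAlgebra.ι k 0
    let y : FreeAlgebra k (Fin 2) := FreeAlgebra.ι k 1
    -- the cubic relations
    let f : FreeAlgebra k (Fin 2) := y * y * y + x * x * x
    let g : FreeAlgebra k (Fin 2) := y * y * x + ζ • (y * x * y) + (ζ ^ 2) • (x * y * y)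
    -- the lower-order parts of the deformed relations F = f + A1f + A2f + A3f,
    -- G = g + A1g + A2g + A3g, i.e. the values α₁(f), α₂(f), α₃(f), α₁(g), α₂(g), α₃(g)
    let A1f : FreeAlgebra k (Fin 2) :=
      a11 • (x * x) + (γ * (1 + 2 * ζ ^ 2) / (1 + ζ)) • (y * y)
    let A2f : FreeAlgebra k (Fin 2) := a21 • x + (γ ^ 2 * ζ / (1 + ζ)) • y
    let A3f : FreeAlgebra k (Fin 2) := algebraMap k (FreeAlgebra k (Fin 2)) a3
    let A1g : FreeAlgebra k (Fin 2) :=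
      (γ * ζ / (1 + ζ)) • (x * y) - (γ * ζ / (1 + ζ)) • (y * x)
    let A2g : FreeAlgebra k (Fin 2) := 0
    let A3g : FreeAlgebra k (Fin 2) := 0
    -- the PBW compatibility conditions of Theorem 1.1, evaluated on the syzygy w
    ∃ β δ : k,
      (x * A1f + y * A1g - A1f * x - ζ • (A1g * y) = β • f + δ • g) ∧
      (β • A1f + δ • A1g = x * A2f + y * A2g - A2f * x - ζ • (A2g * y)) ∧
      (β • A2f + δ • A2g = x * A3f + y * A3g - A3f * x - ζ • (A3g * y)) ∧
      β • A3f + δ • A3g = 0 :=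
  stmt18_general k ζ hζ γ a11 a21 a3
end

section
/- Let $V$ be a vector space over a field of characteristic zero, $L : \wedge^2 V \to V$ a Lie bracket and $\Phi_{2r} : \wedge^{2r} V \to k$ an alternating form such that $L \otimes \Phi_{2r} \circ (\underline{\pm \mathbf{1}^{2r-1} L}) : \wedge^{2r+3} V \to V$ is the zero map. Then for all $a \geq 0$ and $b \geq 1$, the map $\underline{\mathbf{1}^{2a} L^b} \otimes \Phi_{2r} \circ (\underline{\pm \mathbf{1}^{2r-1} L}) : \wedge^{2(r+a+b)+1} V \to V^{\otimes 2a+b}$ is also zero. -/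
open scoped TensorProduct
open PiTensorProduct

namespace PBW19


variable (k V : Type) [Field k] [CharZero k] [AddCommGroup V] [Module k V]

/-- The pure tensor `x 0 ⊗ ⋯ ⊗ x (n-1)` in `V^{⊗n}`. -/
noncomputable def tpN (n : ℕ) (x : ℕ → V) : ⨂[k]^n V := tprod k fun i : Fin n => x i

/-- The total antisymmetrization `∑_{σ ∈ S_n} sgn σ • x_{σ(0)} ⊗ ⋯ ⊗ x_{σ(n-1)}`,
the image of `x 0 ∧ ⋯ ∧ x (n-1)` under the embedding `∧ⁿ V ⊆ V^{⊗n}`. -/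
noncomputable def asymN (n : ℕ) (x : ℕ → V) : ⨂[k]^n V :=
  ∑ σ : Equiv.Perm (Fin n), (Equiv.Perm.sign σ : ℤ) • tprod k (fun i : Fin n => x (σ i))

/-- The image of `∧ⁿ V` in `V^{⊗n}` under total antisymmetrization. -/
noncomputable def wedgeIm (n : ℕ) : Submodule k (⨂[k]^n V) :=
  Submodule.span k (Set.range (asymN k V n))

/-- `x 0 ∧ ⋯ ∧ x (n-1)` as an element of the subspace `∧ⁿ V ⊆ V^{⊗n}`. -/
noncomputable def wdgN (n : ℕ) (x : ℕ → V) : wedgeIm k V n :=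
  ⟨asymN k V n x, Submodule.subset_span ⟨x, rfl⟩⟩

/-- Permute the first `n` entries of the sequence `x` by `σ`. -/
def permt {n : ℕ} (σ : Equiv.Perm (Fin n)) (x : ℕ → V) : ℕ → V :=
  fun m => if h : m < n then x (σ ⟨m, h⟩) else x m

/-- Remove the `j`-th entry of the sequence `x`. -/
def removeN (j : ℕ) (x : ℕ → V) : ℕ → V := fun m => if m < j then x m else x (m + 1)

/-- Prepend the entry `v` at the front of the sequence `x`. -/
def consT (v : V) (x : ℕ → V) : ℕ → V := fun m => if m = 0 then v else x (m - 1)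

/-- Replace the `p`-th entry of the sequence `x` by `v`. -/
def putAt (p : ℕ) (x : ℕ → V) (v : V) : ℕ → V := fun m => if m = p then v else x m


/-- The map `V^{⊗m} → V^{⊗(m+1)}`, `t ↦ v ⊗ t`. -/
noncomputable def prepend (m : ℕ) (v : V) : ⨂[k]^m V →ₗ[k] ⨂[k]^(m+1) V :=
  (TensorPower.cast k V (Nat.add_comm 1 m)).toLinearMap ∘ₗ
    (TensorPower.mulEquiv (R := k) (M := V) (n := 1) (m := m)).toLinearMap ∘ₗ
      TensorProduct.mk k (⨂[k]^1 V) (⨂[k]^m V) (tprod k fun _ : Fin 1 => v)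

/-- The map `V^{⊗m} → V^{⊗(m+1)}`, `t ↦ t ⊗ v`. -/
noncomputable def append (m : ℕ) (v : V) : ⨂[k]^m V →ₗ[k] ⨂[k]^(m+1) V :=
  (TensorPower.mulEquiv (R := k) (M := V) (n := m) (m := 1)).toLinearMap ∘ₗ
    (TensorProduct.mk k (⨂[k]^m V) (⨂[k]^1 V)).flip (tprod k fun _ : Fin 1 => v)


/-- The map `𝟙^{⊗p} ⊗ L ⊗ 𝟙^{⊗·}` applied to a sequence: `L` is applied to the entries in
positions `p, p+1` and the remaining entries are kept. -/
def insL (L : V →ₗ[k] V →ₗ[k] V) (p : ℕ) (x : ℕ → V) : ℕ → V :=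
  fun n => if n < p then x n else if n = p then L (x p) (x (p + 1)) else x (n + 1)

/-- Given a word `w` in the letters `𝟙⊗𝟙` (false) and `L` (true), apply it to the sequence
`x`, each letter consuming two consecutive entries; a letter `false` contributes the two
entries themselves and a letter `true` contributes `L` of them. -/
def blocksAux (L : V →ₗ[k] V →ₗ[k] V) : List Bool → (ℕ → V) → List V
  | [], _ => []
  | b :: t, x =>
      (if b then [L (x 0) (x 1)] else [x 0, x 1]) ++ blocksAux L t (fun n => x (n + 2))

/-- The pure tensor in `V^{⊗n}` whose entries are given by the list `l`. -/
noncomputable def tpOfList (n : ℕ) (l : List V) : ⨂[k]^n V :=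
  tprod k fun i : Fin n => l.getD i 0

/-- The map `𝟙^{2a} L^b : V^{⊗(2a+2b)} → V^{⊗(2a+b)}`, i.e. the sum over all interleavings
of `a` doubled identity factors `𝟙⊗𝟙` and `b` factors `L`, applied to the sequence `x`
(the target tensor power `n` is `2a + b`). -/
noncomputable def unders (L : V →ₗ[k] V →ₗ[k] V) (a b n : ℕ) (x : ℕ → V) : ⨂[k]^n V :=
  ∑ w ∈ Finset.univ.filter
      (fun w : Fin (a + b) → Bool => (Finset.univ.filter (fun t => w t = true)).card = b),
    tpOfList k V n (blocksAux k V L (List.ofFn w) x)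

end PBW19

/-!
Expand `𝟙^{2a} L^b` as a sum over words and fix a word together with one of its letters `L`
(one exists since `b ≥ 1`), say with inputs `2t, 2t + 1`. Embed `S_{2r+3}` into
`S_{2(r+a+b)+1}` as the permutations of these two inputs and of the `2r + 1` inputs of
`Φ ∘ (± 𝟙^{2r-1} L)`. On a right coset `σ S_{2r+3}` all tensor factors but the output of the
chosen letter stay fixed, and by multilinearity that factor collects exactly the alternating sum
of `L ⊗ Φ ∘ (± 𝟙^{2r-1} L)` assumed to vanish. The cosets cover `S_{2(r+a+b)+1}` with
multiplicity `(2r + 3)!`, which can be cancelled in characteristic zero.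
-/

namespace PBW19

section Permt
variable {V : Type}

theorem permt_mul {n : ℕ} (σ τ : Equiv.Perm (Fin n)) (x : ℕ → V) :
    permt V (σ * τ) x = permt V τ (permt V σ x) := by
  funext m
  unfold permt
  split_ifs <;> simp_all

def pullAlong {m n : ℕ} (e : Fin m ↪ Fin n) (z : ℕ → V) : ℕ → V :=
  fun j => if h : j < m then z (e ⟨j, h⟩) else z j

variable {m n : ℕ} (π : Equiv.Perm (Fin m)) (e : Fin m ↪ Fin n) (z : ℕ → V)

theorem permt_viaFintypeEmbedding_apply_image (i : Fin m) :
    permt V (π.viaFintypeEmbedding e) z (e i) = permt V π (pullAlong e z) i := by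
  simp only [permt, pullAlong, Fin.is_lt, dif_pos, Fin.eta,
    Equiv.Perm.viaFintypeEmbedding_apply_image]

theorem permt_viaFintypeEmbedding_of_forall_ne {j : ℕ} (hj : ∀ i, (e i : ℕ) ≠ j) :
    permt V (π.viaFintypeEmbedding e) z j = z j := by
  unfold permt
  split_ifs with h
  · rw [Equiv.Perm.viaFintypeEmbedding_apply_notMem_range]
    rintro ⟨i, hi⟩
    exact hj i (by rw [hi])
  · rfl

end Permt

theorem sum_eq_zero_of_forall_sum_mul_eq_zero {G ι T : Type*} [Group G] [Fintype G]
    [Fintype ι] [Nonempty ι] [AddCommMonoid T] [IsAddTorsionFree T] (F : G → T) (g : ι → G)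
    (h : ∀ σ, ∑ i, F (σ * g i) = 0) : ∑ σ, F σ = 0 := by
  have hcount : Fintype.card ι • ∑ σ, F σ = 0 := by
    calc Fintype.card ι • ∑ σ, F σ = ∑ i, ∑ σ, F (σ * g i) := by
          rw [← Finset.card_univ, ← Finset.sum_const]
          exact Finset.sum_congr rfl fun i _ =>
            (Fintype.sum_equiv (Equiv.mulRight (g i)) _ _ fun _ => rfl).symm
      _ = 0 := by rw [Finset.sum_comm]; exact Finset.sum_eq_zero fun σ _ => h σ
  exact (nsmul_eq_zero_iff_right Fintype.card_ne_zero).mp hcount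

section Blocks
variable {k V : Type} [Field k] [AddCommGroup V] [Module k V] (L : V →ₗ[k] V →ₗ[k] V)

theorem length_blocksAux_ofFn {n : ℕ} (w : Fin n → Bool) (y : ℕ → V) :
    (blocksAux k V L (List.ofFn w) y).length + (Finset.univ.filter fun s => w s = true).card
      = 2 * n := by
  induction n generalizing y with
  | zero => simp [blocksAux]
  | succ n ih =>
    have := ih (fun i => w i.succ) (fun m => y (m + 2))
    rw [List.ofFn_succ, Finset.card_filter, Fin.sum_univ_succ, ← Finset.card_filter] at *
    cases w 0 <;> simp [blocksAux] <;> omega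

theorem blocksAux_congr (l : List Bool) {y y' : ℕ → V} (h : ∀ m < 2 * l.length, y m = y' m) :
    blocksAux k V L l y = blocksAux k V L l y' := by
  induction l generalizing y y' with
  | nil => rfl
  | cons c l ih =>
    simp only [List.length_cons] at h
    simp only [blocksAux]
    rw [h 0 (by omega), h 1 (by omega), ih fun m hm => h (m + 2) (by omega)]

/-- The position in `blocksAux l y` of the output of the `t`-th letter of `l`. -/
def slotIdx : List Bool → ℕ → ℕ
  | [], _ => 0
  | _ :: _, 0 => 0
  | c :: l, t + 1 => slotIdx l t + if c then 1 else 2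

theorem slotIdx_lt_length_blocksAux (l : List Bool) {t : ℕ} (ht : t < l.length) (y : ℕ → V) :
    slotIdx l t < (blocksAux k V L l y).length := by
  induction l generalizing t y with
  | nil => simp at ht
  | cons c l ih =>
    cases t with
    | zero => cases c <;> simp [slotIdx, blocksAux]
    | succ t =>
      have := ih (Nat.lt_of_succ_lt_succ ht) (fun m => y (m + 2))
      cases c <;> simp [slotIdx, blocksAux] <;> omega

theorem blocksAux_eq_set (l : List Bool) {t : ℕ} (ht : t < l.length) (htrue : l[t] = true)
    {y y' : ℕ → V} (h : ∀ m < 2 * l.length, m ≠ 2 * t → m ≠ 2 * t + 1 → y m = y' m) :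
    blocksAux k V L l y' =
      (blocksAux k V L l y).set (slotIdx l t) (L (y' (2 * t)) (y' (2 * t + 1))) := by
  induction l generalizing t y y' with
  | nil => simp at ht
  | cons c l ih =>
    simp only [List.length_cons] at h
    cases t with
    | zero =>
      obtain rfl : c = true := htrue
      have htail : blocksAux k V L l (fun m => y' (m + 2)) =
          blocksAux k V L l (fun m => y (m + 2)) :=
        blocksAux_congr L l fun m hm => (h (m + 2) (by omega) (by omega) (by omega)).symm
      simp [blocksAux, slotIdx, htail]
    | succ t =>
      have ih' := ih (Nat.lt_of_succ_lt_succ ht) htrue (y := fun m => y (m + 2))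
        (y' := fun m => y' (m + 2)) fun m hm h1 h2 => h (m + 2) (by omega) (by omega) (by omega)
      rw [show 2 * t + 2 = 2 * (t + 1) by ring, show 2 * t + 1 + 2 = 2 * (t + 1) + 1 by ring]
        at ih'
      have h0 := h 0 (by omega) (by omega) (by omega)
      have h1 := h 1 (by omega) (by omega) (by omega)
      cases c <;> simp [blocksAux, slotIdx, ih', h0, h1]

theorem tpOfList_set {n : ℕ} {l : List V} (hl : l.length = n) {s : ℕ} (hs : s < n) (v : V) :
    tpOfList k V n (l.set s v) =
      tprod k (Function.update (fun i : Fin n => l.getD i 0) ⟨s, hs⟩ v) := by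
  unfold tpOfList
  congr 1
  funext i
  rcases eq_or_ne i ⟨s, hs⟩ with rfl | hi
  · simp [hl, hs]
  · have hsi : s ≠ i := fun h => hi (Fin.ext h.symm)
    simp [Function.update_of_ne hi, List.getD_eq_getElem?_getD, hsi]

end Blocks

/-- Sends `0, 1` to the inputs `2t, 2t + 1` of the `t`-th letter of a word of length `a + b`,
and `i + 2` to the `i`-th input `2a + 2b + i` of the form. -/
def blockEmb (r a b : ℕ) (t : Fin (a + b)) : Fin (2 * r + 3) ↪ Fin (2 * (r + a + b) + 1) where
  toFun i := ⟨if (i : ℕ) = 0 then 2 * t else if (i : ℕ) = 1 then 2 * t + 1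
      else 2 * a + 2 * b + (i - 2), by split_ifs <;> omega⟩
  inj' i j h := by
    simp only [Fin.mk.injEq] at h
    ext
    split_ifs at h <;> omega

section BlockEmb
variable (r a b : ℕ) (t : Fin (a + b))

theorem val_blockEmb (i : Fin (2 * r + 3)) :
    (blockEmb r a b t i : ℕ) = if (i : ℕ) = 0 then 2 * (t : ℕ)
      else if (i : ℕ) = 1 then 2 * (t : ℕ) + 1 else 2 * a + 2 * b + (i - 2) := rfl

theorem blockEmb_zero : (blockEmb r a b t 0 : ℕ) = 2 * t := rfl

theorem blockEmb_one : (blockEmb r a b t 1 : ℕ) = 2 * t + 1 := rfl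

theorem blockEmb_add_two {n : ℕ} (hn : n + 2 < 2 * r + 3) :
    (blockEmb r a b t ⟨n + 2, hn⟩ : ℕ) = 2 * a + 2 * b + n := by
  simp [val_blockEmb]

theorem blockEmb_ne {m : ℕ} (hm : m < 2 * (a + b)) (h0 : m ≠ 2 * t) (h1 : m ≠ 2 * t + 1)
    (i : Fin (2 * r + 3)) : (blockEmb r a b t i : ℕ) ≠ m := by
  rw [val_blockEmb]
  split_ifs <;> omega

end BlockEmb

section Main
variable {k V : Type} [Field k] [AddCommGroup V] [Module k V] (L : V →ₗ[k] V →ₗ[k] V)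
  {r : ℕ} (Φ : AlternatingMap k V k (Fin (2 * r)))

/-- `Φ ∘ (± 𝟙^{2r-1} L)` evaluated on `y 0 ⊗ ⋯ ⊗ y (2r)`. -/
def pmLForm (y : ℕ → V) : k :=
  ∑ pos ∈ Finset.range (2 * r),
    (-1 : k) ^ (2 * r - 1 - pos) * Φ (fun i : Fin (2 * r) => insL k V L pos y i)

theorem pmLForm_congr {y y' : ℕ → V} (h : ∀ m ≤ 2 * r, y m = y' m) :
    pmLForm L Φ y = pmLForm L Φ y' := by
  refine Finset.sum_congr rfl fun pos hpos => ?_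
  have hpos := Finset.mem_range.mp hpos
  congr 2
  funext i
  simp only [insL]
  split_ifs
  · exact h i (by omega)
  · rw [h pos (by omega), h (pos + 1) (by omega)]
  · exact h (i + 1) (by omega)

/-- `L ⊗ Φ ∘ (± 𝟙^{2r-1} L)` vanishes on `∧^{2r+3} V`. -/
def LTensorPmLFormVanishes : Prop :=
  ∀ y : ℕ → V, ∑ π : Equiv.Perm (Fin (2 * r + 3)), (Equiv.Perm.sign π : ℤ) •
    pmLForm L Φ (fun n => permt V π y (n + 2)) • L (permt V π y 0) (permt V π y 1) = 0

theorem sum_viaFintypeEmbedding_blockEmb_eq_zero (hvanish : LTensorPmLFormVanishes L Φ)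
    {a b : ℕ} (w : Fin (a + b) → Bool) (hw : (Finset.univ.filter fun s => w s = true).card = b)
    (t : Fin (a + b)) (ht : w t = true) (z : ℕ → V) :
    ∑ π : Equiv.Perm (Fin (2 * r + 3)), (Equiv.Perm.sign π : ℤ) •
      pmLForm L Φ
          (fun n => permt V (π.viaFintypeEmbedding (blockEmb r a b t)) z (2 * a + 2 * b + n)) •
        tpOfList k V (2 * a + b)
          (blocksAux k V L (List.ofFn w) (permt V (π.viaFintypeEmbedding (blockEmb r a b t)) z))
      = 0 := by
  set e := blockEmb r a b t
  set y := pullAlong e z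
  have hform (π : Equiv.Perm (Fin (2 * r + 3))) :
      pmLForm L Φ (fun n => permt V (π.viaFintypeEmbedding e) z (2 * a + 2 * b + n)) =
        pmLForm L Φ (fun n => permt V π y (n + 2)) :=
    pmLForm_congr L Φ fun m hm => by
      have hm' : m + 2 < 2 * r + 3 := by omega
      rw [← blockEmb_add_two r a b t hm', permt_viaFintypeEmbedding_apply_image]
  have hlt : (t : ℕ) < (List.ofFn w).length := by simp
  have hblocks (π : Equiv.Perm (Fin (2 * r + 3))) :
      blocksAux k V L (List.ofFn w) (permt V (π.viaFintypeEmbedding e) z) =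
        (blocksAux k V L (List.ofFn w) z).set (slotIdx (List.ofFn w) t)
          (L (permt V π y 0) (permt V π y 1)) := by
    rw [blocksAux_eq_set L _ hlt (by simpa using ht) fun m hm h0 h1 =>
      (permt_viaFintypeEmbedding_of_forall_ne π e z
        (blockEmb_ne r a b t (by simpa using hm) h0 h1)).symm,
      ← blockEmb_one r a b t, ← blockEmb_zero r a b t,
      permt_viaFintypeEmbedding_apply_image, permt_viaFintypeEmbedding_apply_image]
    rfl
  have hlen : (blocksAux k V L (List.ofFn w) z).length = 2 * a + b := by
    have := length_blocksAux_ofFn L w z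
    omega
  have hs : slotIdx (List.ofFn w) t < 2 * a + b :=
    hlen ▸ slotIdx_lt_length_blocksAux L _ hlt z
  let ℓ := (PiTensorProduct.tprod k).toLinearMap (fun i : Fin (2 * a + b) =>
    (blocksAux k V L (List.ofFn w) z).getD i 0) ⟨_, hs⟩
  calc _ = ℓ (∑ π : Equiv.Perm (Fin (2 * r + 3)), (Equiv.Perm.sign π : ℤ) •
        pmLForm L Φ (fun n => permt V π y (n + 2)) • L (permt V π y 0) (permt V π y 1)) := by
        rw [map_sum]
        refine Finset.sum_congr rfl fun π _ => ?_
        rw [hform, hblocks, tpOfList_set hlen hs, map_zsmul, map_smul]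
        rfl
    _ = 0 := by rw [hvanish y, map_zero]

theorem sum_sign_smul_pmLForm_smul_unders_eq_zero [CharZero k]
    (hvanish : LTensorPmLFormVanishes L Φ) {a b : ℕ} (hb : 1 ≤ b) (x : ℕ → V) :
    ∑ σ : Equiv.Perm (Fin (2 * (r + a + b) + 1)), (Equiv.Perm.sign σ : ℤ) •
      pmLForm L Φ (fun n => permt V σ x (2 * a + 2 * b + n)) •
        unders k V L a b (2 * a + b) (permt V σ x) = 0 := by
  simp only [unders, ← Int.cast_smul_eq_zsmul k, Finset.smul_sum]
  rw [Finset.sum_comm]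
  refine Finset.sum_eq_zero fun w hw => ?_
  have hcard := (Finset.mem_filter.mp hw).2
  obtain ⟨t, ht⟩ := Finset.card_pos.mp (hcard ▸ hb)
  have := IsAddTorsionFree.of_isTorsionFree k (⨂[k]^(2 * a + b) V)
  refine sum_eq_zero_of_forall_sum_mul_eq_zero _
    (fun π : Equiv.Perm (Fin (2 * r + 3)) => π.viaFintypeEmbedding (blockEmb r a b t))
    fun σ => ?_
  simp only [permt_mul, Equiv.Perm.sign_mul, Equiv.Perm.viaFintypeEmbedding_sign, Units.val_mul,
    Int.cast_mul, mul_smul]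
  rw [← Finset.smul_sum]
  simp only [Int.cast_smul_eq_zsmul,
    sum_viaFintypeEmbedding_blockEmb_eq_zero L Φ hvanish w hcard t
      (Finset.mem_filter.mp ht).2, smul_zero]

end Main

variable (k V : Type) [Field k] [CharZero k] [AddCommGroup V] [Module k V]

theorem stmt19 (r a b : ℕ) (hb : 1 ≤ b)
    (L : V →ₗ[k] V →ₗ[k] V)
    (Φ : AlternatingMap k V k (Fin (2 * r)))
    (hvanish : ∀ x : ℕ → V,
      (∑ σ : Equiv.Perm (Fin (2 * r + 3)), (Equiv.Perm.sign σ : ℤ) •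
          ∑ pos ∈ Finset.range (2 * r),
            ((-1 : k) ^ (2 * r - 1 - pos) *
                Φ (fun i : Fin (2 * r) =>
                  insL k V L pos (fun n => permt V σ x (n + 2)) i)) •
              L (permt V σ x 0) (permt V σ x 1)) = 0) :
    ∀ x : ℕ → V,
      (∑ σ : Equiv.Perm (Fin (2 * (r + a + b) + 1)), (Equiv.Perm.sign σ : ℤ) •
          ∑ pos ∈ Finset.range (2 * r),
            ((-1 : k) ^ (2 * r - 1 - pos) *
                Φ (fun i : Fin (2 * r) =>
                  insL k V L pos (fun n => permt V σ x (2 * a + 2 * b + n)) i)) •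
              unders k V L a b (2 * a + b) (permt V σ x)) = 0 := by
  intro x
  have hvanish' : LTensorPmLFormVanishes L Φ := fun y => by
    simpa only [pmLForm, Finset.sum_smul] using hvanish y
  simpa only [pmLForm, Finset.sum_smul] using
    sum_sign_smul_pmLForm_smul_unders_eq_zero L Φ hvanish' hb x

end PBW19
end
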